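/- Assume the partition of unity I = Σ_q R_q^T D_q R_q, the boundary condition yielding R_p A R_q^T D_q = R_p R_q^T A_q D_q R_q R_q^T (with A_q = R_q A R_q^T), and the compatibility identity (1). Then the local residual formula holds: for any u ∈ R^N and f ∈ R^N, R_p (f − A u) = Σ_{q=1}^P R_p R_q^T (D_q R_q f − A_q D_q R_q u). -/

import Mathlib

open Matrix BigOperators
open scoped Classical

/-- `R` is a Boolean restriction matrix: entries 0/1, exactly one 1 per row,
at most one 1 per column. -/
def IsRestriction {m n : ℕ} (R : Matrix (Fin m) (Fin n) ℝ) : Prop :=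
  (∀ i j, R i j = 0 ∨ R i j = 1) ∧
  (∀ i, ∃! j, R i j = 1) ∧
  (∀ j i i', R i j = 1 → R i' j = 1 → i = i')

/-- `D` is a diagonal Boolean matrix: diagonal with entries 0/1. -/
def IsDiagBool {n : ℕ} (D : Matrix (Fin n) (Fin n) ℝ) : Prop :=
  D.IsDiag ∧ ∀ i, D i i = 0 ∨ D i i = 1

/-! The partition of unity `1 = ∑ q, R_qᵀ D_q R_q` lets every global vector be split into
local pieces `R_q v`; splitting `f` and `u` this way and applying `R_p` and `R_p A` gives the
residual as a sum of local contributions, and the compatibility identity moves `A` into the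
local matrices `A_q`. -/

theorem Matrix.mulVec_eq_sum_of_sum_transpose_mul_mul_eq_one {ι α m n : Type*} [Fintype ι]
    [CommSemiring α] [Fintype n] [DecidableEq n] {k : ι → Type*} [∀ q, Fintype (k q)]
    {R : ∀ q, Matrix (k q) n α} {D : ∀ q, Matrix (k q) (k q) α}
    (hsum : ∑ q, (R q)ᵀ * D q * R q = 1) (M : Matrix m n α) (v : n → α) :
    M *ᵥ v = ∑ q, (M * (R q)ᵀ * D q) *ᵥ (R q *ᵥ v) := by
  conv_lhs => rw [← Matrix.mul_one M, ← hsum, Matrix.mul_sum, sum_mulVec]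
  simp only [mulVec_mulVec, Matrix.mul_assoc]

theorem stmt5_general (P N : ℕ) (Np : Fin P → ℕ) (A : Matrix (Fin N) (Fin N) ℝ)
    (R : ∀ p, Matrix (Fin (Np p)) (Fin N) ℝ)
    (D : ∀ p, Matrix (Fin (Np p)) (Fin (Np p)) ℝ)
    (hsum : ∑ q, (R q)ᵀ * D q * R q = (1 : Matrix (Fin N) (Fin N) ℝ))
    (hcompat : ∀ p q, R p * A * (R q)ᵀ * D q
      = R p * (R q)ᵀ * (R q * A * (R q)ᵀ) * D q)
    (u f : Fin N → ℝ) (p : Fin P) :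
    R p *ᵥ (f - A *ᵥ u)
      = ∑ q, (R p * (R q)ᵀ) *ᵥ
          (D q *ᵥ (R q *ᵥ f) - ((R q * A * (R q)ᵀ) * D q) *ᵥ (R q *ᵥ u)) := by
  rw [mulVec_sub, mulVec_mulVec,
    mulVec_eq_sum_of_sum_transpose_mul_mul_eq_one hsum (R p) f,
    mulVec_eq_sum_of_sum_transpose_mul_mul_eq_one hsum (R p * A) u, ← Finset.sum_sub_distrib]
  refine Finset.sum_congr rfl fun q _ => ?_
  rw [hcompat, mulVec_sub]
  simp only [mulVec_mulVec, Matrix.mul_assoc]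

/-- local residual formula. -/
theorem stmt5 (P N : ℕ) (Np : Fin P → ℕ) (A : Matrix (Fin N) (Fin N) ℝ)
    (R : ∀ p, Matrix (Fin (Np p)) (Fin N) ℝ)
    (D : ∀ p, Matrix (Fin (Np p)) (Fin (Np p)) ℝ)
    (hR : ∀ p, IsRestriction (R p)) (hD : ∀ p, IsDiagBool (D p))
    (hsum : ∑ q, (R q)ᵀ * D q * R q = (1 : Matrix (Fin N) (Fin N) ℝ))
    (hcompat : ∀ p q, R p * A * (R q)ᵀ * D q
      = R p * (R q)ᵀ * (R q * A * (R q)ᵀ) * D q)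
    (u f : Fin N → ℝ) (p : Fin P) :
    R p *ᵥ (f - A *ᵥ u)
      = ∑ q, (R p * (R q)ᵀ) *ᵥ
          (D q *ᵥ (R q *ᵥ f) - ((R q * A * (R q)ᵀ) * D q) *ᵥ (R q *ᵥ u)) :=
  stmt5_general P N Np A R D hsum hcompat u f p
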